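/- Let H and A be N×N complex matrices with H Hermitian, and define f : ℝ → Matrix(N,N,ℂ) by f(θ) = exp(iθH) · A · exp(−iθH). Then: (i) for every integer p ≥ 1 and every φ ∈ ℝ, the p-th derivative satisfies f^(p)(φ) = i^p · exp(iφH) · ad_H^p(A) · exp(−iφH); and (ii) for every integer p ≥ 2 and every φ ∈ ℝ, ‖f^(p)(φ)‖ ≤ (2·ω_max(H))^(p−2) · ‖[H,[H,A]]‖. -/

import Mathlib

open scoped Matrix.Norms.L2Operator

/-- The `p`-fold nested commutator `ad_H^p(A) = [H, [H, …, [H, A]…]]`. -/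
noncomputable def adPow {N : ℕ} (H : Matrix (Fin N) (Fin N) ℂ) :
    ℕ → Matrix (Fin N) (Fin N) ℂ → Matrix (Fin N) (Fin N) ℂ
  | 0, A => A
  | p + 1, A => H * adPow H p A - adPow H p A * H

/-- The maximal frequency of a Hermitian matrix: the difference between its largest and
smallest eigenvalues. -/
noncomputable def omegaMax {N : ℕ} {H : Matrix (Fin N) (Fin N) ℂ} (hH : H.IsHermitian) : ℝ :=
  (⨆ i, hH.eigenvalues i) - ⨅ i, hH.eigenvalues i

/-!
Differentiating `exp(iθH) X exp(-iθH)` brings down `i[H, X]`, so `f⁽ᵖ⁾(φ)` is the conjugate of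
`iᵖ ad_H^p(A)` by the unitaries `exp(±iφH)` and has norm `‖ad_H^p(A)‖`. A commutator with `H` does
not change when `H` is shifted by a scalar, and after the shift by `λ_min` the spectrum of `H` lies
in `[0, ω_max]`; hence `‖[H, X]‖ ≤ 2 ω_max ‖X‖`, and each commutator beyond the second costs at most
a factor `2 ω_max`.
-/

open Matrix Unitary NormedSpace

theorem Matrix.IsHermitian.norm_sub_smul_one {𝕜 n : Type*} [RCLike 𝕜] [Fintype n] [DecidableEq n]
    {H : Matrix n n 𝕜} (hH : H.IsHermitian) (c : ℝ) :
    ‖H - c • 1‖ = ‖fun i ↦ ((hH.eigenvalues i - c : ℝ) : 𝕜)‖ := by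
  set u := hH.eigenvectorUnitary
  have hconj : H - c • 1 =
      conjStarAlgAut 𝕜 _ u (diagonal fun i ↦ ((hH.eigenvalues i - c : ℝ) : 𝕜)) := by
    conv_lhs => rw [hH.spectral_theorem, RCLike.real_smul_eq_coe_smul (K := 𝕜)]
    rw [← map_one (conjStarAlgAut 𝕜 _ u), ← map_smul, ← map_sub]
    congr 1
    ext i j
    by_cases h : i = j <;> simp [h, Algebra.algebraMap_eq_smul_one, sub_smul]
  rw [hconj, conjStarAlgAut_apply, ← coe_star, CStarRing.norm_mul_coe_unitary,
    CStarRing.norm_coe_unitary_mul, l2_opNorm_diagonal]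

theorem norm_commutator_le_two_mul_norm_sub_smul_one {R 𝔸 : Type*} [CommRing R] [NormedRing 𝔸]
    [Algebra R 𝔸] (H X : 𝔸) (c : R) :
    ‖H * X - X * H‖ ≤ 2 * ‖H - c • 1‖ * ‖X‖ := by
  have hshift : H * X - X * H = (H - c • 1) * X - X * (H - c • 1) := by
    simp only [sub_mul, mul_sub, smul_mul_assoc, mul_smul_comm, one_mul, mul_one]
    abel
  calc ‖H * X - X * H‖ ≤ ‖H - c • 1‖ * ‖X‖ + ‖X‖ * ‖H - c • 1‖ := by
        rw [hshift]
        exact (norm_sub_le _ _).trans (add_le_add (norm_mul_le _ _) (norm_mul_le _ _))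
    _ = 2 * ‖H - c • 1‖ * ‖X‖ := by ring

theorem hasDerivAt_exp_smul_mul_mul_exp_smul_neg {𝔸 : Type*} [NormedRing 𝔸] [NormedAlgebra ℝ 𝔸]
    [CompleteSpace 𝔸] (X C : 𝔸) (t : ℝ) :
    HasDerivAt (fun s : ℝ ↦ exp (s • X) * C * exp (s • -X))
      (exp (t • X) * (X * C - C * X) * exp (t • -X)) t := by
  refine (((hasDerivAt_exp_smul_const X t).mul_const C).mul
    (hasDerivAt_exp_smul_const' (-X) t)).congr_deriv ?_
  noncomm_ring

section UnitaryConjugation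

open Complex

theorem IsSelfAdjoint.exp_I_mul_smul_mem_unitary {A : Type*} [NormedRing A] [NormedAlgebra ℂ A]
    [StarRing A] [ContinuousStar A] [CompleteSpace A] [StarModule ℂ A] {a : A}
    (ha : IsSelfAdjoint a) (r : ℝ) : NormedSpace.exp ((I * r) • a) ∈ unitary A := by
  simpa [mul_smul] using
    (selfAdjoint.expUnitary ⟨(r : ℂ) • a, IsSelfAdjoint.smul (conj_ofReal r) ha⟩).prop

theorem Matrix.hasDerivAt_exp_I_smul_conj {n : Type*} [Fintype n] [DecidableEq n]
    (H C : Matrix n n ℂ) (t : ℝ) :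
    HasDerivAt (fun θ : ℝ ↦ exp ((I * θ) • H) * C * exp ((-(I * θ)) • H))
      (I • (exp ((I * t) • H) * (H * C - C * H) * exp ((-(I * t)) • H))) t := by
  have hsmul (θ : ℝ) : (I * θ) • H = θ • (I • H) := by
    rw [mul_comm, mul_smul, Complex.coe_smul]
  have hnegsmul (θ : ℝ) : (-(I * θ)) • H = θ • -(I • H) := by rw [neg_smul, hsmul, smul_neg]
  have h := hasDerivAt_exp_smul_mul_mul_exp_smul_neg (I • H) C t
  simp only [← hsmul, ← hnegsmul] at h
  refine h.congr_deriv ?_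
  rw [smul_mul_assoc, mul_smul_comm, ← smul_sub, mul_smul_comm, smul_mul_assoc]

theorem iteratedDeriv_exp_I_smul_conj {N : ℕ} (H A : Matrix (Fin N) (Fin N) ℂ) (p : ℕ) :
    iteratedDeriv p (fun θ : ℝ ↦ exp ((I * θ) • H) * A * exp ((-(I * θ)) • H)) =
      fun φ : ℝ ↦ I ^ p • (exp ((I * φ) • H) * adPow H p A * exp ((-(I * φ)) • H)) := by
  induction p with
  | zero => simp only [iteratedDeriv_zero, pow_zero, one_smul, adPow]
  | succ p ih =>
    ext1 φ
    have h := (hasDerivAt_exp_I_smul_conj H (adPow H p A) φ).const_smul (I ^ p)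
    rw [smul_smul, ← pow_succ] at h
    rw [iteratedDeriv_succ, ih]
    exact h.deriv

end UnitaryConjugation

section Bounds

variable {N : ℕ} {H : Matrix (Fin N) (Fin N) ℂ}

theorem omegaMax_nonneg (hH : H.IsHermitian) : 0 ≤ omegaMax hH := by
  rcases isEmpty_or_nonempty (Fin N) with hN | hN
  · -- for `N = 0` both extrema are the junk value `0`
    simp [omegaMax]
  · exact sub_nonneg.2 (ciInf_le_ciSup (Finite.bddBelow_range _) (Finite.bddAbove_range _))

theorem norm_sub_iInf_eigenvalues_smul_one_le (hH : H.IsHermitian) :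
    ‖H - (⨅ i, hH.eigenvalues i) • 1‖ ≤ omegaMax hH := by
  refine (hH.norm_sub_smul_one _).le.trans ?_
  refine (pi_norm_le_iff_of_nonneg (omegaMax_nonneg hH)).2 fun i ↦ ?_
  have hmin := ciInf_le (Finite.bddBelow_range hH.eigenvalues) i
  have hmax := le_ciSup (Finite.bddAbove_range hH.eigenvalues) i
  rw [RCLike.norm_ofReal, abs_of_nonneg (sub_nonneg.2 hmin), omegaMax]
  linarith

theorem norm_commutator_le_omegaMax (hH : H.IsHermitian) (X : Matrix (Fin N) (Fin N) ℂ) :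
    ‖H * X - X * H‖ ≤ 2 * omegaMax hH * ‖X‖ := by
  refine (norm_commutator_le_two_mul_norm_sub_smul_one H X (⨅ i, hH.eigenvalues i)).trans ?_
  gcongr
  exact norm_sub_iInf_eigenvalues_smul_one_le hH

theorem adPow_add (A : Matrix (Fin N) (Fin N) ℂ) (m n : ℕ) :
    adPow H (m + n) A = adPow H m (adPow H n A) := by
  induction m with
  | zero => rw [zero_add, adPow]
  | succ m ih => rw [Nat.succ_add, adPow, adPow, ih]

theorem norm_adPow_le (hH : H.IsHermitian) (p : ℕ) (X : Matrix (Fin N) (Fin N) ℂ) :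
    ‖adPow H p X‖ ≤ (2 * omegaMax hH) ^ p * ‖X‖ := by
  induction p with
  | zero => rw [adPow, pow_zero, one_mul]
  | succ p ih =>
    have hω : 0 ≤ 2 * omegaMax hH := mul_nonneg zero_le_two (omegaMax_nonneg hH)
    calc ‖adPow H (p + 1) X‖ ≤ 2 * omegaMax hH * ‖adPow H p X‖ :=
          norm_commutator_le_omegaMax hH _
      _ ≤ 2 * omegaMax hH * ((2 * omegaMax hH) ^ p * ‖X‖) := by gcongr
      _ = (2 * omegaMax hH) ^ (p + 1) * ‖X‖ := by ring

end Bounds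

theorem stmt7_general {N : ℕ} (H A : Matrix (Fin N) (Fin N) ℂ) (hH : H.IsHermitian)
    (f : ℝ → Matrix (Fin N) (Fin N) ℂ)
    (hf : ∀ θ : ℝ, f θ = NormedSpace.exp ((Complex.I * (θ : ℂ)) • H) * A *
        NormedSpace.exp ((-(Complex.I * (θ : ℂ))) • H)) :
    (∀ p : ℕ, 1 ≤ p → ∀ φ : ℝ,
      iteratedDeriv p f φ = (Complex.I ^ p) •
        (NormedSpace.exp ((Complex.I * (φ : ℂ)) • H) * adPow H p A *
          NormedSpace.exp ((-(Complex.I * (φ : ℂ))) • H))) ∧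
    (∀ p : ℕ, 2 ≤ p → ∀ φ : ℝ,
      ‖iteratedDeriv p f φ‖ ≤
        (2 * omegaMax hH) ^ (p - 2) * ‖H * (H * A - A * H) - (H * A - A * H) * H‖) := by
  have hderiv (p : ℕ) (φ : ℝ) : iteratedDeriv p f φ = Complex.I ^ p •
      (exp ((Complex.I * φ) • H) * adPow H p A * exp ((-(Complex.I * φ)) • H)) := by
    rw [funext hf, iteratedDeriv_exp_I_smul_conj]
  refine ⟨fun p _ φ ↦ hderiv p φ, fun p hp φ ↦ ?_⟩
  obtain ⟨q, rfl⟩ : ∃ q, p = q + 2 := ⟨p - 2, by omega⟩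
  have hU := hH.isSelfAdjoint.exp_I_mul_smul_mem_unitary φ
  have hV : exp ((-(Complex.I * φ)) • H) ∈ unitary (Matrix (Fin N) (Fin N) ℂ) := by
    simpa using hH.isSelfAdjoint.exp_I_mul_smul_mem_unitary (-φ)
  calc ‖iteratedDeriv (q + 2) f φ‖ = ‖adPow H q (adPow H 2 A)‖ := by
        rw [hderiv, norm_smul, norm_pow, Complex.norm_I, one_pow, one_mul,
          CStarRing.norm_mul_mem_unitary _ hV, CStarRing.norm_mem_unitary_mul _ hU, adPow_add]
    _ ≤ (2 * omegaMax hH) ^ q * ‖adPow H 2 A‖ := norm_adPow_le hH q _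

/-- For `f(θ) = exp(iθH)·A·exp(−iθH)` with `H` Hermitian:
(i) `f⁽ᵖ⁾(φ) = iᵖ·exp(iφH)·ad_H^p(A)·exp(−iφH)` for `p ≥ 1`; and
(ii) `‖f⁽ᵖ⁾(φ)‖ ≤ (2·ω_max(H))^(p−2)·‖[H,[H,A]]‖` for `p ≥ 2`. -/
theorem stmt7 {N : ℕ} [NeZero N] (H A : Matrix (Fin N) (Fin N) ℂ) (hH : H.IsHermitian)
    (f : ℝ → Matrix (Fin N) (Fin N) ℂ)
    (hf : ∀ θ : ℝ, f θ = NormedSpace.exp ((Complex.I * (θ : ℂ)) • H) * A *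
        NormedSpace.exp ((-(Complex.I * (θ : ℂ))) • H)) :
    (∀ p : ℕ, 1 ≤ p → ∀ φ : ℝ,
      iteratedDeriv p f φ = (Complex.I ^ p) •
        (NormedSpace.exp ((Complex.I * (φ : ℂ)) • H) * adPow H p A *
          NormedSpace.exp ((-(Complex.I * (φ : ℂ))) • H))) ∧
    (∀ p : ℕ, 2 ≤ p → ∀ φ : ℝ,
      ‖iteratedDeriv p f φ‖ ≤
        (2 * omegaMax hH) ^ (p - 2) * ‖H * (H * A - A * H) - (H * A - A * H) * H‖) :=
  stmt7_general H A hH f hf
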